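/- arXiv:2110.15123 — 2 statements merged into one kernel-verified Lean document; each statement's English description precedes it below -/
import Mathlib

section
/- If two numbers m, n (each with four decimal digits, not all equal) have the same parameters α and β, i.e., the same difference of extreme ordered digits and the same difference of middle ordered digits, then K(m) = K(n). -/
/-! With sorted digits `a ≤ b ≤ c ≤ d`, the Kaprekar difference is
`999 * (d - a) + 90 * (c - b)`, so it depends only on the two parameters. -/

/-- The decimal digits of `n` (little-endian), padded with zeros to length `w`. -/
def padDigits (w n : ℕ) : List ℕ := (Nat.digits 10 n ++ List.replicate w 0).take w

/-- The padded digits of `n` sorted ascending (little-endian), so that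
`Nat.ofDigits 10 (sortedDigits w n)` is the descending arrangement `X` and
`Nat.ofDigits 10 (sortedDigits w n).reverse` is the ascending arrangement `Y`. -/
def sortedDigits (w n : ℕ) : List ℕ := (padDigits w n).mergeSort (· ≤ ·)

/-- The Kaprekar map on `w`-digit numbers: descending arrangement minus ascending arrangement. -/
def kap (w n : ℕ) : ℕ :=
  Nat.ofDigits 10 (sortedDigits w n) - Nat.ofDigits 10 (sortedDigits w n).reverse

/-- All `w` (padded) digits of `n` are equal. -/
def allEqDigits (w n : ℕ) : Prop := ∃ d, padDigits w n = List.replicate w d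

theorem length_sortedDigits (w n : ℕ) : (sortedDigits w n).length = w := by
  simp [sortedDigits, padDigits, List.length_mergeSort]

theorem sortedDigits_pairwise_le (w n : ℕ) : (sortedDigits w n).Pairwise (· ≤ ·) :=
  List.pairwise_mergeSort' _ _

theorem exists_sortedDigits_four_eq (n : ℕ) :
    ∃ a b c d, a ≤ b ∧ b ≤ c ∧ c ≤ d ∧ sortedDigits 4 n = [a, b, c, d] := by
  have hlen := length_sortedDigits 4 n
  have hsorted := sortedDigits_pairwise_le 4 n
  match sortedDigits 4 n, hlen, hsorted with
  | [a, b, c, d], _, hs =>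
    simp only [List.pairwise_cons, List.mem_cons, List.not_mem_nil] at hs
    exact ⟨a, b, c, d, hs.1 b (by simp), hs.2.1 c (by simp), hs.2.2.1 d (by simp), rfl⟩

theorem ofDigits_sub_ofDigits_reverse_of_le {B a b c d : ℕ}
    (hab : a ≤ b) (hbc : b ≤ c) (hcd : c ≤ d) :
    Nat.ofDigits B [a, b, c, d] - Nat.ofDigits B [d, c, b, a]
      = (B ^ 3 - 1) * (d - a) + (B ^ 2 - B) * (c - b) := by
  have had : a ≤ d := hab.trans (hbc.trans hcd)
  rcases Nat.eq_zero_or_pos B with rfl | hB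
  · simp [Nat.ofDigits, had]
  have hB3 : 1 ≤ B ^ 3 := Nat.one_le_pow _ _ hB
  have hB2 : B ≤ B ^ 2 := Nat.le_self_pow two_ne_zero B
  refine Nat.sub_eq_of_eq_add' ?_
  simp only [Nat.ofDigits_cons, Nat.ofDigits_nil]
  zify [hB3, hB2, had, hbc]
  ring

theorem kap_four_eq (n : ℕ) :
    kap 4 n = 999 * ((sortedDigits 4 n).getD 3 0 - (sortedDigits 4 n).getD 0 0)
      + 90 * ((sortedDigits 4 n).getD 2 0 - (sortedDigits 4 n).getD 1 0) := by
  obtain ⟨a, b, c, d, hab, hbc, hcd, h⟩ := exists_sortedDigits_four_eq n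
  rw [kap, h]
  exact ofDigits_sub_ofDigits_reverse_of_le hab hbc hcd

theorem stmt8_general (m n : ℕ)
    (hα : (sortedDigits 4 m).getD 3 0 - (sortedDigits 4 m).getD 0 0
        = (sortedDigits 4 n).getD 3 0 - (sortedDigits 4 n).getD 0 0)
    (hβ : (sortedDigits 4 m).getD 2 0 - (sortedDigits 4 m).getD 1 0
        = (sortedDigits 4 n).getD 2 0 - (sortedDigits 4 n).getD 1 0) :
    kap 4 m = kap 4 n := by
  rw [kap_four_eq, kap_four_eq, hα, hβ]

theorem stmt8 (m n : ℕ)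
    (hm0 : 0 < m) (hm1 : m < 10000) (hm2 : ¬ allEqDigits 4 m)
    (hn0 : 0 < n) (hn1 : n < 10000) (hn2 : ¬ allEqDigits 4 n)
    (hα : (sortedDigits 4 m).getD 3 0 - (sortedDigits 4 m).getD 0 0
        = (sortedDigits 4 n).getD 3 0 - (sortedDigits 4 n).getD 0 0)
    (hβ : (sortedDigits 4 m).getD 2 0 - (sortedDigits 4 m).getD 1 0
        = (sortedDigits 4 n).getD 2 0 - (sortedDigits 4 n).getD 1 0) :
    kap 4 m = kap 4 n :=
  stmt8_general m n hα hβ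
end

section
/- A 4-digit number n = (a, b, c, d) with digits not all equal lies in the image of the 4-digit Kaprekar map if and only if either (a + d = 10, b + c = 8, and a ≥ b + 1) or (a + d = 9, b = c = 9, and a ≤ 8). -/
/-! If the digits of `n`, sorted, are `x ≥ y ≥ z ≥ w`, then
`K(n) = (1000x + 100y + 10z + w) - (1000w + 100z + 10y + x) = 999 (x - w) + 90 (y - z)`,
so the image of `K` consists of the numbers `999 p + 90 q` with `1 ≤ p ≤ 9` and `0 ≤ q ≤ p`;
each of them is attained, by `1000 p + 100 q`. Writing `999 p + 90 q` in decimal gives the digits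
`(p, q - 1, 9 - q, 10 - p)` when `q ≥ 1` and `(p - 1, 9, 9, 10 - p)` when `q = 0`. -/

lemma padDigits_zero (n : ℕ) : padDigits 0 n = [] := rfl

lemma padDigits_succ (w n : ℕ) : padDigits (w + 1) n = n % 10 :: padDigits w (n / 10) := by
  rcases Nat.eq_zero_or_pos n with rfl | hn
  · simp [padDigits, List.replicate_succ]
  · rw [padDigits, Nat.digits_def' (by norm_num) hn, List.cons_append, List.take_succ_cons,
      List.replicate_succ', ← List.append_assoc, List.take_append_of_le_length] <;>
      simp [padDigits]

lemma padDigits_four (n : ℕ) :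
    padDigits 4 n = [n % 10, n / 10 % 10, n / 100 % 10, n / 1000 % 10] := by
  simp only [padDigits_succ, padDigits_zero, Nat.div_div_eq_div_mul]

lemma ofDigits_sub_ofDigits_reverse {w z y x : ℕ} (hwz : w ≤ z) (hzy : z ≤ y) (hyx : y ≤ x) :
    Nat.ofDigits 10 [w, z, y, x] - Nat.ofDigits 10 [w, z, y, x].reverse =
      999 * (x - w) + 90 * (y - z) := by
  simp only [List.reverse_cons, List.reverse_nil, List.nil_append, List.cons_append,
    Nat.ofDigits_cons, Nat.ofDigits_nil]
  omega

lemma decimal_digits_unique {a b c d a' b' c' d' : ℕ} (hb : b ≤ 9) (hc : c ≤ 9) (hd : d ≤ 9)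
    (hb' : b' ≤ 9) (hc' : c' ≤ 9) (hd' : d' ≤ 9)
    (h : 1000 * a + 100 * b + 10 * c + d = 1000 * a' + 100 * b' + 10 * c' + d') :
    a = a' ∧ b = b' ∧ c = c' ∧ d = d' := by
  omega

lemma exists_kap_four_eq_of_not_allEqDigits {n : ℕ} (hn : ¬ allEqDigits 4 n) :
    ∃ p q, 0 < p ∧ p ≤ 9 ∧ q ≤ p ∧ kap 4 n = 999 * p + 90 * q := by
  have hperm : (sortedDigits 4 n).Perm (padDigits 4 n) := List.mergeSort_perm _ _
  have hsorted : (sortedDigits 4 n).Pairwise (· ≤ ·) := by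
    simpa [sortedDigits] using List.pairwise_mergeSort (le := fun a b : ℕ => decide (a ≤ b))
      (fun _ _ _ => by simpa using le_trans) (fun a b => by simpa using le_total a b) _
  obtain ⟨w, z, y, x, hs⟩ := List.length_eq_four.mp
    (hperm.length_eq.trans (by simp [padDigits_four]))
  have hx : x < 10 := by
    have hmem : x ∈ padDigits 4 n := hperm.subset (by simp [hs])
    simp only [padDigits_four, List.mem_cons, List.not_mem_nil, or_false] at hmem
    omega
  rw [hs] at hsorted
  simp only [List.pairwise_cons, List.mem_cons, List.not_mem_nil, or_false,
    forall_eq_or_imp, forall_eq, List.Pairwise.nil, false_implies, implies_true,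
    and_true] at hsorted
  obtain ⟨⟨hwz, -, hwx⟩, ⟨hzy, -⟩, hyx⟩ := hsorted
  have hwltx : w < x := by
    refine lt_of_le_of_ne hwx fun hwx_eq => hn ⟨w, ?_⟩
    subst hwx_eq
    have hrep : sortedDigits 4 n = List.replicate 4 w := by
      rw [hs, show z = w by omega, show y = w by omega]
      rfl
    exact List.perm_replicate.mp (hrep ▸ hperm.symm)
  refine ⟨x - w, y - z, by omega, by omega, by omega, ?_⟩
  rw [kap, hs, ofDigits_sub_ofDigits_reverse hwz hzy hyx]

lemma kap_four_thousand_mul_add {p q : ℕ} (hqp : q ≤ p) (hp : p ≤ 9) :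
    kap 4 (1000 * p + 100 * q) = 999 * p + 90 * q := by
  have hdigits : padDigits 4 (1000 * p + 100 * q) = [0, 0, q, p] := by
    rw [padDigits_four]
    simp only [List.cons.injEq, and_true]
    omega
  have hsorted : sortedDigits 4 (1000 * p + 100 * q) = [0, 0, q, p] := by
    rw [sortedDigits, hdigits, List.mergeSort_eq_self]
    simp [hqp]
  rw [kap, hsorted, ofDigits_sub_ofDigits_reverse le_rfl (Nat.zero_le q) hqp]
  omega

lemma not_allEqDigits_four_thousand_mul_add {p q : ℕ} (hp : 0 < p) (hqp : q ≤ p) (hp9 : p ≤ 9) :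
    ¬ allEqDigits 4 (1000 * p + 100 * q) := by
  rintro ⟨d, hd⟩
  rw [padDigits_four] at hd
  simp only [List.replicate_succ, List.replicate_zero, List.cons.injEq, and_true] at hd
  omega

lemma exists_kap_four_eq_iff (N : ℕ) :
    (∃ m : ℕ, 0 < m ∧ m < 10000 ∧ ¬ allEqDigits 4 m ∧ kap 4 m = N) ↔
      ∃ p q, 0 < p ∧ p ≤ 9 ∧ q ≤ p ∧ N = 999 * p + 90 * q := by
  constructor
  · rintro ⟨m, -, -, hm, rfl⟩
    exact exists_kap_four_eq_of_not_allEqDigits hm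
  · rintro ⟨p, q, hp, hp9, hqp, rfl⟩
    exact ⟨1000 * p + 100 * q, by omega, by omega,
      not_allEqDigits_four_thousand_mul_add hp hqp hp9, kap_four_thousand_mul_add hqp hp9⟩

lemma exists_eq_kaprekar_form_iff {a b c d : ℕ}
    (ha : a ≤ 9) (hb : b ≤ 9) (hc : c ≤ 9) (hd : d ≤ 9) :
    (∃ p q, 0 < p ∧ p ≤ 9 ∧ q ≤ p ∧ 1000 * a + 100 * b + 10 * c + d = 999 * p + 90 * q) ↔
      ((a + d = 10 ∧ b + c = 8 ∧ b + 1 ≤ a) ∨ (a + d = 9 ∧ b = 9 ∧ c = 9 ∧ a ≤ 8)) := by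
  constructor
  · rintro ⟨p, q, hp, hp9, hqp, h⟩
    rcases Nat.eq_zero_or_pos q with rfl | hq
    · have h' : 1000 * a + 100 * b + 10 * c + d =
          1000 * (p - 1) + 100 * 9 + 10 * 9 + (10 - p) := by
        omega
      have := decimal_digits_unique hb hc hd le_rfl le_rfl (by omega) h'
      omega
    · have h' : 1000 * a + 100 * b + 10 * c + d =
          1000 * p + 100 * (q - 1) + 10 * (9 - q) + (10 - p) := by
        omega
      have := decimal_digits_unique hb hc hd (by omega) (by omega) (by omega) h'
      omega
  · rintro (⟨had, hbc, hba⟩ | ⟨had, hb9, hc9, ha8⟩)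
    · exact ⟨a, b + 1, by omega⟩
    · exact ⟨a + 1, 0, by omega⟩

theorem stmt12_general (a b c d : ℕ)
    (ha : a ≤ 9) (hb : b ≤ 9) (hc : c ≤ 9) (hd : d ≤ 9) :
    (∃ m : ℕ, 0 < m ∧ m < 10000 ∧ ¬ allEqDigits 4 m ∧
        kap 4 m = 1000 * a + 100 * b + 10 * c + d) ↔
      ((a + d = 10 ∧ b + c = 8 ∧ b + 1 ≤ a) ∨
       (a + d = 9 ∧ b = 9 ∧ c = 9 ∧ a ≤ 8)) := by
  rw [exists_kap_four_eq_iff, exists_eq_kaprekar_form_iff ha hb hc hd]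

theorem stmt12 (a b c d : ℕ)
    (ha : a ≤ 9) (hb : b ≤ 9) (hc : c ≤ 9) (hd : d ≤ 9)
    (hne : ¬ (a = b ∧ b = c ∧ c = d)) :
    (∃ m : ℕ, 0 < m ∧ m < 10000 ∧ ¬ allEqDigits 4 m ∧
        kap 4 m = 1000 * a + 100 * b + 10 * c + d) ↔
      ((a + d = 10 ∧ b + c = 8 ∧ b + 1 ≤ a) ∨
       (a + d = 9 ∧ b = 9 ∧ c = 9 ∧ a ≤ 8)) :=
  stmt12_general a b c d ha hb hc hd
end
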